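/- The weight function w on closed conditional expressions, defined by w(a)=w(T)=w(F)=2 for atoms a and w(x ◁ y ▷ z) = (w(x)·w(z))^{w(y)}, strictly decreases under each rewrite rule obtained by orienting the CP axioms left to right: w(x ◁ T ▷ y) > w(x), w(x ◁ F ▷ y) > w(y), w(T ◁ x ▷ F) > w(x), and w(x ◁ (y ◁ z ▷ u) ▷ v) > w((x ◁ y ▷ v) ◁ z ▷ (x ◁ u ▷ v)), for all closed terms x,y,z,u,v. -/

import Mathlib

/-!
Every weight is at least 2. The first three rules then lose weight because a number of size at least 2
is smaller than any positive power of its product with another such number, and `n < 4 ^ n`.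
For the fourth rule both sides are powers of the same base `b = w x * w v ≥ 4`: the left-hand exponent is
`(w y * w u) ^ w z`, the right-hand one `(w y + w u) * w z`, and `p + q ≤ p * q` together with
`m * k < m ^ k` (for `m ≥ 3`, `k ≥ 2`) makes the former strictly larger.
-/

inductive CE (A : Type) : Type
  | tt : CE A
  | ff : CE A
  | atom : A → CE A
  | cond : CE A → CE A → CE A → CE A

/-- The weight function: w(a) = w(T) = w(F) = 2 and w(x ◁ y ▷ z) = (w x * w z) ^ (w y). -/
def w {A : Type} : CE A → ℕ
  | .tt => 2
  | .ff => 2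
  | .atom _ => 2
  | .cond x y z => (w x * w z) ^ (w y)

theorem Nat.lt_mul_pow {a b k : ℕ} (ha : 0 < a) (hb : 2 ≤ b) (hk : k ≠ 0) : a < (a * b) ^ k :=
  calc a < a * b := by nlinarith
    _ ≤ (a * b) ^ k := Nat.le_self_pow hk _

theorem Nat.mul_lt_pow_self {m k : ℕ} (hm : 3 ≤ m) (hk : 2 ≤ k) : m * k < m ^ k := by
  induction k, hk using Nat.le_induction with
  | base => nlinarith
  | succ k hk ih =>
    calc m * (k + 1) = m * k + m := by ring
      _ < m ^ k + m := by omega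
      _ ≤ m ^ k * m := by nlinarith [Nat.le_self_pow (by omega : k ≠ 0) m]
      _ = m ^ (k + 1) := (pow_succ m k).symm

theorem Nat.add_mul_lt_mul_pow {p q k : ℕ} (hp : 2 ≤ p) (hq : 2 ≤ q) (hk : 2 ≤ k) :
    (p + q) * k < (p * q) ^ k :=
  calc (p + q) * k ≤ p * q * k := Nat.mul_le_mul_right k (Nat.add_le_mul hp hq)
    _ < (p * q) ^ k := Nat.mul_lt_pow_self (by nlinarith) hk

namespace CE

variable {A : Type}

theorem two_le_w (t : CE A) : 2 ≤ w t := by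
  induction t with
  | tt | ff | atom => exact le_rfl
  | cond x y z hx _ hz =>
    calc 2 ≤ w x * w z := le_mul_of_le_of_one_le hx (by omega)
      _ ≤ (w x * w z) ^ w y := Nat.le_self_pow (by omega) _

theorem w_cond_tt_gt (x y : CE A) : w x < w (cond x tt y) :=
  Nat.lt_mul_pow (by linarith [two_le_w x]) (two_le_w y) two_ne_zero

theorem w_cond_ff_gt (x y : CE A) : w y < w (cond x ff y) := by
  rw [w, mul_comm]
  exact Nat.lt_mul_pow (by linarith [two_le_w y]) (two_le_w x) two_ne_zero

theorem w_cond_tt_ff_gt (x : CE A) : w x < w (cond tt x ff) :=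
  Nat.lt_pow_self (by simp [w])

theorem w_cond_cond_gt (x y z u v : CE A) :
    w (cond (cond x y v) z (cond x u v)) < w (cond x (cond y z u) v) := by
  have hbase : 1 < w x * w v := by nlinarith [two_le_w x, two_le_w v]
  show ((w x * w v) ^ w y * (w x * w v) ^ w u) ^ w z < (w x * w v) ^ (w y * w u) ^ w z
  rw [← pow_add, ← pow_mul]
  exact Nat.pow_lt_pow_right hbase (Nat.add_mul_lt_mul_pow (two_le_w y) (two_le_w u) (two_le_w z))

end CE

theorem weight_decreases (A : Type) (x y z u v : CE A) :
    w (.cond x .tt y) > w x ∧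
    w (.cond x .ff y) > w y ∧
    w (.cond .tt x .ff) > w x ∧
    w (.cond x (.cond y z u) v) > w (.cond (.cond x y v) z (.cond x u v)) :=
  ⟨CE.w_cond_tt_gt x y, CE.w_cond_ff_gt x y, CE.w_cond_tt_ff_gt x, CE.w_cond_cond_gt x y z u v⟩
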